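/- Let M be the 4-valued matrix with values {1,2,3,4}, designated values {2,3,4}, negation ¬1=4, ¬2=3, ¬3=4, ¬4=1, and binary operations (x,y) ↦ (x∨y, x∧dy, x⊃y): (1,1)↦(1,1,4), (1,2)↦(2,1,2), (1,3)↦(3,1,2), (1,4)↦(4,1,4), (2,1)↦(2,1,1), (2,2)↦(2,3,3), (2,3)↦(2,4,3), (2,4)↦(2,4,3), (3,1)↦(3,1,1), (3,2)↦(3,3,4), (3,3)↦(3,2,4), (3,4)↦(4,2,3), (4,1)↦(4,1,1), (4,2)↦(4,4,2), (4,3)↦(4,3,3), (4,4)↦(4,4,3). Then M validates all axiom schemes C1–C15, the designated values are closed under modus ponens for ⊃, and there exist values a,b such that ¬(a∨¬a) ⊃ b is not designated. Consequently the scheme ¬(α∨¬α) ⊃ β (axiom D12) is not derivable in the system C. -/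
import Mathlib


inductive Fm where
  | atom : Nat → Fm
  | neg : Fm → Fm
  | or : Fm → Fm → Fm
  | dand : Fm → Fm → Fm
  | dimp : Fm → Fm → Fm

inductive CProv : Fm → Prop where
  | mp {a b : Fm} : CProv (.dimp a b) → CProv a → CProv b
  | ax1 {a b : Fm} : CProv (.dimp (a) (.dimp (b) (a)))
  | ax2 {a b c : Fm} : CProv (.dimp (.dimp (a) (.dimp (b) (c))) (.dimp (.dimp (a) (b)) (.dimp (a) (c))))
  | ax3 {a b : Fm} : CProv (.dimp (.dand (a) (b)) (a))
  | ax4 {a b : Fm} : CProv (.dimp (.dand (a) (b)) (b))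
  | ax5 {a b : Fm} : CProv (.dimp (a) (.dimp (b) (.dand (a) (b))))
  | ax6 {a b : Fm} : CProv (.dimp (a) (.or (a) (b)))
  | ax7 {a b : Fm} : CProv (.dimp (b) (.or (a) (b)))
  | ax8 {a b c : Fm} : CProv (.dimp (.dimp (a) (c)) (.dimp (.dimp (b) (c)) (.dimp (.or (a) (b)) (c))))
  | ax9 {a b : Fm} : CProv (.or (a) (.dimp (a) (b)))
  | ax10 {a : Fm} : CProv (.neg (.dand (.neg (a)) (.dand (.neg (.neg (a))) (.neg (.or (a) (.neg (a)))))))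
  | ax11 {a b c : Fm} : CProv (.dimp (.neg (.dand (.neg (a)) (.dand (.neg (b)) (.neg (.or (a) (b)))))) (.neg (.dand (.neg (a)) (.dand (.neg (b)) (.dand (.neg (c)) (.neg (.or (a) (.or (b) (c)))))))))
  | ax12 {a b c : Fm} : CProv (.dimp (.neg (.dand (.neg (a)) (.dand (.neg (b)) (.dand (.neg (c)) (.neg (.or (a) (.or (b) (c)))))))) (.neg (.dand (.neg (a)) (.dand (.neg (c)) (.dand (.neg (b)) (.neg (.or (a) (.or (c) (b)))))))))
  | ax13 {a b c : Fm} : CProv (.dimp (.neg (.dand (.neg (a)) (.dand (.neg (b)) (.dand (.neg (c)) (.neg (.or (a) (.or (b) (c)))))))) (.dimp (.or (a) (.or (b) (.neg (c)))) (.or (a) (b))))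
  | ax14 {a b : Fm} : CProv (.dimp (.neg (.dand (.neg (a)) (.neg (b)))) (.or (a) (b)))
  | ax15 {a b : Fm} : CProv (.dimp (.or (a) (.or (b) (.neg (b)))) (.neg (.dand (.neg (a)) (.neg (.or (b) (.neg (b)))))))

def vneg : Fin 4 → Fin 4 := ![3, 2, 3, 0]

def vor : Fin 4 → Fin 4 → Fin 4 := ![![0, 1, 2, 3], ![1, 1, 1, 1], ![2, 2, 2, 3], ![3, 3, 3, 3]]

def vand : Fin 4 → Fin 4 → Fin 4 := ![![0, 0, 0, 0], ![0, 2, 3, 3], ![0, 2, 1, 1], ![0, 3, 2, 3]]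

def vimp : Fin 4 → Fin 4 → Fin 4 := ![![3, 1, 1, 3], ![0, 2, 2, 2], ![0, 3, 3, 2], ![0, 1, 2, 2]]

def Des (x : Fin 4) : Prop := x ≠ 0

instance (x : Fin 4) : Decidable (Des x) := by unfold Des; infer_instance

def evalFm (v : Nat → Fin 4) : Fm → Fin 4
  | .atom n => v n
  | .neg a => vneg (evalFm v a)
  | .or a b => vor (evalFm v a) (evalFm v b)
  | .dand a b => vand (evalFm v a) (evalFm v b)
  | .dimp a b => vimp (evalFm v a) (evalFm v b)

theorem matfacts :
(∀ a b : Fin 4, Des (vimp (a) (vimp (b) (a)))) ∧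
    (∀ a b c : Fin 4, Des (vimp (vimp (a) (vimp (b) (c))) (vimp (vimp (a) (b)) (vimp (a) (c))))) ∧
    (∀ a b : Fin 4, Des (vimp (vand (a) (b)) (a))) ∧
    (∀ a b : Fin 4, Des (vimp (vand (a) (b)) (b))) ∧
    (∀ a b : Fin 4, Des (vimp (a) (vimp (b) (vand (a) (b))))) ∧
    (∀ a b : Fin 4, Des (vimp (a) (vor (a) (b)))) ∧
    (∀ a b : Fin 4, Des (vimp (b) (vor (a) (b)))) ∧
    (∀ a b c : Fin 4, Des (vimp (vimp (a) (c)) (vimp (vimp (b) (c)) (vimp (vor (a) (b)) (c))))) ∧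
    (∀ a b : Fin 4, Des (vor (a) (vimp (a) (b)))) ∧
    (∀ a : Fin 4, Des (vneg (vand (vneg (a)) (vand (vneg (vneg (a))) (vneg (vor (a) (vneg (a)))))))) ∧
    (∀ a b c : Fin 4, Des (vimp (vneg (vand (vneg (a)) (vand (vneg (b)) (vneg (vor (a) (b)))))) (vneg (vand (vneg (a)) (vand (vneg (b)) (vand (vneg (c)) (vneg (vor (a) (vor (b) (c)))))))))) ∧
    (∀ a b c : Fin 4, Des (vimp (vneg (vand (vneg (a)) (vand (vneg (b)) (vand (vneg (c)) (vneg (vor (a) (vor (b) (c)))))))) (vneg (vand (vneg (a)) (vand (vneg (c)) (vand (vneg (b)) (vneg (vor (a) (vor (c) (b)))))))))) ∧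
    (∀ a b c : Fin 4, Des (vimp (vneg (vand (vneg (a)) (vand (vneg (b)) (vand (vneg (c)) (vneg (vor (a) (vor (b) (c)))))))) (vimp (vor (a) (vor (b) (vneg (c)))) (vor (a) (b))))) ∧
    (∀ a b : Fin 4, Des (vimp (vneg (vand (vneg (a)) (vneg (b)))) (vor (a) (b)))) ∧
    (∀ a b : Fin 4, Des (vimp (vor (a) (vor (b) (vneg (b)))) (vneg (vand (vneg (a)) (vneg (vor (b) (vneg (b)))))))) ∧
    (∀ x y : Fin 4, Des x → Des (vimp x y) → Des y) := by decide

theorem soundness {f : Fm} (h : CProv f) (v : Nat → Fin 4) : Des (evalFm v f) := by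
  obtain ⟨h1,h2,h3,h4,h5,h6,h7,h8,h9,h10,h11,h12,h13,h14,h15,hmp⟩ := matfacts
  induction h with
  | mp _ _ ih1 ih2 => exact hmp _ _ ih2 ih1
  | ax1 => exact h1 _ _
  | ax2 => exact h2 _ _ _
  | ax3 => exact h3 _ _
  | ax4 => exact h4 _ _
  | ax5 => exact h5 _ _
  | ax6 => exact h6 _ _
  | ax7 => exact h7 _ _
  | ax8 => exact h8 _ _ _
  | ax9 => exact h9 _ _
  | ax10 => exact h10 _
  | ax11 => exact h11 _ _ _
  | ax12 => exact h12 _ _ _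
  | ax13 => exact h13 _ _ _
  | ax14 => exact h14 _ _
  | ax15 => exact h15 _ _

theorem stmt1 :
    (∀ a b : Fin 4, Des (vimp (a) (vimp (b) (a)))) ∧
    (∀ a b c : Fin 4, Des (vimp (vimp (a) (vimp (b) (c))) (vimp (vimp (a) (b)) (vimp (a) (c))))) ∧
    (∀ a b : Fin 4, Des (vimp (vand (a) (b)) (a))) ∧
    (∀ a b : Fin 4, Des (vimp (vand (a) (b)) (b))) ∧
    (∀ a b : Fin 4, Des (vimp (a) (vimp (b) (vand (a) (b))))) ∧
    (∀ a b : Fin 4, Des (vimp (a) (vor (a) (b)))) ∧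
    (∀ a b : Fin 4, Des (vimp (b) (vor (a) (b)))) ∧
    (∀ a b c : Fin 4, Des (vimp (vimp (a) (c)) (vimp (vimp (b) (c)) (vimp (vor (a) (b)) (c))))) ∧
    (∀ a b : Fin 4, Des (vor (a) (vimp (a) (b)))) ∧
    (∀ a : Fin 4, Des (vneg (vand (vneg (a)) (vand (vneg (vneg (a))) (vneg (vor (a) (vneg (a)))))))) ∧
    (∀ a b c : Fin 4, Des (vimp (vneg (vand (vneg (a)) (vand (vneg (b)) (vneg (vor (a) (b)))))) (vneg (vand (vneg (a)) (vand (vneg (b)) (vand (vneg (c)) (vneg (vor (a) (vor (b) (c)))))))))) ∧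
    (∀ a b c : Fin 4, Des (vimp (vneg (vand (vneg (a)) (vand (vneg (b)) (vand (vneg (c)) (vneg (vor (a) (vor (b) (c)))))))) (vneg (vand (vneg (a)) (vand (vneg (c)) (vand (vneg (b)) (vneg (vor (a) (vor (c) (b)))))))))) ∧
    (∀ a b c : Fin 4, Des (vimp (vneg (vand (vneg (a)) (vand (vneg (b)) (vand (vneg (c)) (vneg (vor (a) (vor (b) (c)))))))) (vimp (vor (a) (vor (b) (vneg (c)))) (vor (a) (b))))) ∧
    (∀ a b : Fin 4, Des (vimp (vneg (vand (vneg (a)) (vneg (b)))) (vor (a) (b)))) ∧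
    (∀ a b : Fin 4, Des (vimp (vor (a) (vor (b) (vneg (b)))) (vneg (vand (vneg (a)) (vneg (vor (b) (vneg (b)))))))) ∧
    (∀ x y : Fin 4, Des x → Des (vimp x y) → Des y) ∧
    (∃ a b : Fin 4, ¬ Des (vimp (vneg (vor (a) (vneg (a)))) (b))) ∧
    ¬ (∀ a b : Fm, CProv (.dimp (.neg (.or (a) (.neg (a)))) (b))) := by
  obtain ⟨h1,h2,h3,h4,h5,h6,h7,h8,h9,h10,h11,h12,h13,h14,h15,hmp⟩ := matfacts
  refine ⟨h1,h2,h3,h4,h5,h6,h7,h8,h9,h10,h11,h12,h13,h14,h15,hmp,⟨1,0,by decide⟩,?_⟩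
  intro h
  have := soundness (h (.atom 0) (.atom 1)) (fun n => if n = 0 then 1 else 0)
  revert this
  show ¬ Des (vimp (vneg (vor 1 (vneg 1))) 0)
  decide
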